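/- Let ε ≥ 0, δ_q ≥ 0, α ∈ [0,1), and let W ≥ 1 be a natural number. Suppose for each segment index k ≥ 1 there is a sequence (e_{k,j})_{0 ≤ j ≤ W} of nonnegative real numbers and a context error η_k ≥ 0 such that: (i) e_{k,0} ≤ η_k; (ii) e_{k,j} ≤ ε + α·e_{k,j−1} for all 1 ≤ j ≤ W; (iii) η_1 = 0; (iv) η_{k+1} ≤ e_{k,W} + δ_q for all k ≥ 1. Then every frame-level error satisfies e_{k,j} ≤ W·ε + (W·ε + δ_q)/(1 − α^W) for all k ≥ 1 and 1 ≤ j ≤ W; in particular, for any rollout horizon T, the maximum frame error under sliding-window re-encoding is bounded by W·ε + (W·ε + δ_q)/(1 − α^W), a quantity that does not depend on T. -/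

import Mathlib

/-!
Within a segment the errors obey an affine contraction, so `e k j ≤ j * ε + α ^ j * η k`.
At the boundary this gives `η (k + 1) ≤ W * ε + δq + α ^ W * η k`, a contraction by `α ^ W < 1`
whose fixed point is `B = (W * ε + δq) / (1 - α ^ W)`; since `η 1 = 0 ≤ B`, every context error
stays below `B`, and then every frame error stays below `W * ε + B`.
-/

lemma le_natCast_mul_add_pow_mul {ε α : ℝ} (hε : 0 ≤ ε) (hα0 : 0 ≤ α) (hα1 : α ≤ 1)
    {x : ℕ → ℝ} {n : ℕ} (hx : ∀ j < n, x (j + 1) ≤ ε + α * x j) :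
    ∀ j ≤ n, x j ≤ j * ε + α ^ j * x 0 := by
  intro j hj
  induction j with
  | zero => simp
  | succ j ih =>
    have hjε : α * (j * ε) ≤ j * ε := mul_le_of_le_one_left (by positivity) hα1
    calc x (j + 1) ≤ ε + α * x j := hx j hj
      _ ≤ ε + α * (j * ε + α ^ j * x 0) := by gcongr; exact ih (by omega)
      _ = ε + α * (j * ε) + α ^ (j + 1) * x 0 := by ring
      _ ≤ ((j + 1 : ℕ) : ℝ) * ε + α ^ (j + 1) * x 0 := by push_cast; linarith

lemma add_mul_div_one_sub_eq {a c : ℝ} (ha : a ≠ 1) : c + a * (c / (1 - a)) = c / (1 - a) := by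
  have : 1 - a ≠ 0 := sub_ne_zero.mpr ha.symm
  field_simp
  ring

lemma le_div_one_sub_of_le_add_mul {a c : ℝ} (ha0 : 0 ≤ a) (ha1 : a < 1) {y : ℕ → ℝ} {m : ℕ}
    (hm : y m ≤ c / (1 - a)) (hy : ∀ k, m ≤ k → y (k + 1) ≤ c + a * y k) :
    ∀ k, m ≤ k → y k ≤ c / (1 - a) := by
  intro k hk
  induction k, hk using Nat.le_induction with
  | base => exact hm
  | succ k hk ih =>
    calc y (k + 1) ≤ c + a * y k := hy k hk
      _ ≤ c + a * (c / (1 - a)) := by gcongr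
      _ = c / (1 - a) := add_mul_div_one_sub_eq ha1.ne

theorem swr_stability_general
    (ε δq α : ℝ) (hε : 0 ≤ ε) (hδq : 0 ≤ δq) (hα0 : 0 ≤ α) (hα1 : α < 1)
    (W : ℕ)
    (e : ℕ → ℕ → ℝ) (η : ℕ → ℝ)
    (hctx : ∀ k, 1 ≤ k → e k 0 ≤ η k)
    (hrec : ∀ k, 1 ≤ k → ∀ j, 1 ≤ j → j ≤ W → e k j ≤ ε + α * e k (j - 1))
    (h1 : η 1 = 0)
    (hrefresh : ∀ k, 1 ≤ k → η (k + 1) ≤ e k W + δq) :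
    ∀ k, 1 ≤ k → ∀ j, 1 ≤ j → j ≤ W →
      e k j ≤ (W : ℝ) * ε + ((W : ℝ) * ε + δq) / (1 - α ^ W) := by
  intro k hk j hj hjW
  have hαW : α ^ W < 1 := pow_lt_one₀ hα0 hα1 (by omega)
  set B := ((W : ℝ) * ε + δq) / (1 - α ^ W)
  have hB : 0 ≤ B := div_nonneg (by positivity) (by linarith)
  have hseg : ∀ k, 1 ≤ k → ∀ i ≤ W, e k i ≤ i * ε + α ^ i * η k := fun k hk i hi => by
    have := le_natCast_mul_add_pow_mul hε hα0 hα1.le (x := e k) (n := W)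
      (fun m hm => by simpa using hrec k hk (m + 1) (by omega) hm) i hi
    linarith [mul_le_mul_of_nonneg_left (hctx k hk) (pow_nonneg hα0 i)]
  have hηB : ∀ k, 1 ≤ k → η k ≤ B :=
    le_div_one_sub_of_le_add_mul (pow_nonneg hα0 W) hαW (h1 ▸ hB) fun k hk => by
      linarith [hrefresh k hk, hseg k hk W le_rfl]
  calc e k j ≤ j * ε + α ^ j * η k := hseg k hk j hjW
    _ ≤ W * ε + α ^ j * B := by gcongr; exact hηB k hk
    _ ≤ W * ε + B := by gcongr; exact mul_le_of_le_one_left hB (pow_le_one₀ hα0 hα1.le)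

/-- Proposition 1 (stability of sliding-window re-encoding): with per-step
error bound `ε`, decode–re-encode quantization error bound `δ_q`, contraction
factor `α ∈ [0,1)`, and window size `W ≥ 1`, if within each segment `k ≥ 1`
the frame errors satisfy `e k 0 ≤ η k` and `e k j ≤ ε + α * e k (j-1)` for
`1 ≤ j ≤ W`, the initial context is ground truth (`η 1 = 0`), and contexts
refresh as `η (k+1) ≤ e k W + δ_q`, then every frame error satisfies
`e k j ≤ W * ε + (W * ε + δ_q) / (1 - α^W)`, a bound independent of the
rollout horizon. -/
theorem swr_stability
    (ε δq α : ℝ) (hε : 0 ≤ ε) (hδq : 0 ≤ δq) (hα0 : 0 ≤ α) (hα1 : α < 1)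
    (W : ℕ) (hW : 1 ≤ W)
    (e : ℕ → ℕ → ℝ) (η : ℕ → ℝ)
    (he_nonneg : ∀ k, 1 ≤ k → ∀ j, j ≤ W → 0 ≤ e k j)
    (hη_nonneg : ∀ k, 1 ≤ k → 0 ≤ η k)
    (hctx : ∀ k, 1 ≤ k → e k 0 ≤ η k)
    (hrec : ∀ k, 1 ≤ k → ∀ j, 1 ≤ j → j ≤ W → e k j ≤ ε + α * e k (j - 1))
    (h1 : η 1 = 0)
    (hrefresh : ∀ k, 1 ≤ k → η (k + 1) ≤ e k W + δq) :
    ∀ k, 1 ≤ k → ∀ j, 1 ≤ j → j ≤ W →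
      e k j ≤ (W : ℝ) * ε + ((W : ℝ) * ε + δq) / (1 - α ^ W) :=
  swr_stability_general ε δq α hε hδq hα0 hα1 W e η hctx hrec h1 hrefresh
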